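/- Let K be a compact Hausdorff space and let ⋆ : C(K,ℝ) × C(K,ℝ) → C(K,ℝ) be a bilinear, associative operation such that ‖f ⋆ g‖∞ ≤ ‖f‖∞·‖g‖∞ for all f, g, such that f ≥ 0 and g ≥ 0 imply f ⋆ g ≥ 0, and such that the constant function 1 is a two-sided identity for ⋆. Then ⋆ is the pointwise multiplication: f ⋆ g = f·g for all f, g ∈ C(K,ℝ). -/

import Mathlib

/-!
Fix a point `x`. If `h ≥ 0` vanishes at `x` and `g ≥ 0`, then `h ⋆ g` and `h ⋆ (‖g‖ - g)` are
nonnegative and, `1` being a right identity, add up to `‖g‖ h`; so both vanish at `x`. Splitting `h`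
into positive and negative parts removes the sign condition on `h`, and writing
`f = (f - f(x)) + f(x) 1` with `1` a left identity gives `(f ⋆ g)(x) = f(x) g(x)` for `g ≥ 0`.
Splitting `g` into positive and negative parts finishes the proof.
-/

open ContinuousMap

namespace ContinuousMap

variable {X : Type*} [TopologicalSpace X]

theorem posPart_apply (f : C(X, ℝ)) (x : X) : f⁺ x = (f x)⁺ := rfl

theorem negPart_apply (f : C(X, ℝ)) (x : X) : f⁻ x = (f x)⁻ := rfl

variable (star : C(X, ℝ) →ₗ[ℝ] C(X, ℝ) →ₗ[ℝ] C(X, ℝ))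

theorem star_apply_eq_zero_of_nonneg [CompactSpace X]
    (star_nonneg : ∀ f g : C(X, ℝ), 0 ≤ f → 0 ≤ g → 0 ≤ star f g)
    (star_one : ∀ f : C(X, ℝ), star f 1 = f)
    {h g : C(X, ℝ)} {x : X} (hh : 0 ≤ h) (hx : h x = 0) (hg : 0 ≤ g) :
    star h g x = 0 := by
  have hg_le : g ≤ ‖g‖ • 1 := fun y => by simpa using apply_le_norm g y
  have hsum : star h g + star h (‖g‖ • 1 - g) = ‖g‖ • h := by
    rw [← map_add, add_sub_cancel, map_smul, star_one]
  have h₁ : 0 ≤ star h g x := star_nonneg h g hh hg x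
  have h₂ : 0 ≤ star h (‖g‖ • 1 - g) x := star_nonneg h _ hh (sub_nonneg.2 hg_le) x
  have hsum_x := congr($hsum x)
  simp only [add_apply, smul_apply, hx, smul_zero] at hsum_x
  linarith

theorem star_apply_eq_zero [CompactSpace X]
    (star_nonneg : ∀ f g : C(X, ℝ), 0 ≤ f → 0 ≤ g → 0 ≤ star f g)
    (star_one : ∀ f : C(X, ℝ), star f 1 = f)
    {h g : C(X, ℝ)} {x : X} (hx : h x = 0) (hg : 0 ≤ g) :
    star h g x = 0 := by
  rw [← posPart_sub_negPart h, map_sub, LinearMap.sub_apply, sub_apply,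
    star_apply_eq_zero_of_nonneg star star_nonneg star_one (posPart_nonneg h)
      (by simp [posPart_apply, hx]) hg,
    star_apply_eq_zero_of_nonneg star star_nonneg star_one (negPart_nonneg h)
      (by simp [negPart_apply, hx]) hg,
    sub_zero]

theorem star_apply_of_nonneg [CompactSpace X]
    (star_nonneg : ∀ f g : C(X, ℝ), 0 ≤ f → 0 ≤ g → 0 ≤ star f g)
    (one_star : ∀ f : C(X, ℝ), star 1 f = f)
    (star_one : ∀ f : C(X, ℝ), star f 1 = f)
    (f : C(X, ℝ)) {g : C(X, ℝ)} (x : X) (hg : 0 ≤ g) :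
    star f g x = f x * g x := by
  have hsplit : star f g = star (f - f x • 1) g + f x • g := by
    conv_lhs => rw [← sub_add_cancel f (f x • 1), map_add, map_smul]
    rw [LinearMap.add_apply, LinearMap.smul_apply, one_star]
  have hvanish : star (f - f x • 1) g x = 0 :=
    star_apply_eq_zero star star_nonneg star_one (by simp) hg
  rw [hsplit, add_apply, hvanish, smul_apply, smul_eq_mul, zero_add]

end ContinuousMap

theorem continuousMap_product_with_one_is_pointwise
    {K : Type*} [TopologicalSpace K] [CompactSpace K]
    (star : C(K, ℝ) →ₗ[ℝ] C(K, ℝ) →ₗ[ℝ] C(K, ℝ))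
    (star_nonneg : ∀ f g : C(K, ℝ), 0 ≤ f → 0 ≤ g → 0 ≤ star f g)
    (one_star : ∀ f : C(K, ℝ), star 1 f = f)
    (star_one : ∀ f : C(K, ℝ), star f 1 = f) :
    ∀ f g : C(K, ℝ), star f g = f * g := by
  intro f g
  ext x
  rw [← posPart_sub_negPart g, map_sub, mul_sub, ContinuousMap.sub_apply,
    ContinuousMap.sub_apply, mul_apply, mul_apply,
    star_apply_of_nonneg star star_nonneg one_star star_one f x (posPart_nonneg g),
    star_apply_of_nonneg star star_nonneg one_star star_one f x (negPart_nonneg g)]
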